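/- (Counting of constant solutions of the isotropic equation.) Let n ≥ 2, 1 ≤ p < n, α > 0 and q < α/(n+α). Fix a unit vector e ∈ ℝⁿ and define F : (0,∞) → [0,∞) by F(r) = r^{n−p}·g_{α,q}(r·e) (F(r) is independent of e). Set R = (α/q)^{1/α} if q > 0 and R = ∞ if q ≤ 0. Then: F(r) → 0 as r → 0⁺, F(r) → 0 as r → R, F vanishes on [R, ∞) when q > 0, and there is a unique r* ∈ (0, R) such that F is strictly increasing on (0, r*] and strictly decreasing on [r*, R). Consequently, writing c* = F(r*) > 0, for every constant c the equation F(r) = c with r > 0 (which is exactly the equation satisfied by constant positive solutions h ≡ r of c·h^{p−1}·g_{α,q}(h)^{−1}·κ = 1 on a sphere of radius r, whose Gauss curvature is κ = r^{−(n−1)}) has precisely two solutions if 0 < c < c*, precisely one solution if c = c*, and no solution if c > c*. -/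

import Mathlib

open MeasureTheory Real Filter
open scoped Pointwise RealInnerProductSpace

/-- The (unnormalized) radial profile of the generalized Gaussian density in dimension `n`:
`r ↦ max(1 − (q/α) r^α, 0)^(1/q − n/α − 1)` for `q ≠ 0` and `r ↦ exp(−r^α/α)` for `q = 0`. -/
noncomputable def gProfile (n : ℕ) (α q r : ℝ) : ℝ :=
  if q = 0 then Real.exp (-(r ^ α) / α)
  else (max (1 - q / α * r ^ α) 0) ^ (1 / q - (n : ℝ) / α - 1)

/-- The partition function `Z(α,q)`, i.e. the normalizing constant making the generalized
Gaussian density a probability density. -/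
noncomputable def Zconst (n : ℕ) (α q : ℝ) : ℝ :=
  ∫ x : EuclideanSpace ℝ (Fin n), gProfile n α q ‖x‖

/-- The generalized Gaussian density `g_{α,q}` on `ℝⁿ`. -/
noncomputable def gGauss (n : ℕ) (α q : ℝ) (x : EuclideanSpace ℝ (Fin n)) : ℝ :=
  (Zconst n α q)⁻¹ * gProfile n α q ‖x‖

/-- The generalized Gaussian volume `G_{α,q}(K) = ∫_K g_{α,q}(x) dx`. -/
noncomputable def Ggen (n : ℕ) (α q : ℝ) (K : Set (EuclideanSpace ℝ (Fin n))) : ℝ :=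
  ∫ x in K, gGauss n α q x


/-!
With `m = n - p`, the derivative of `F(r) = Z⁻¹ r^m g(r)` is `c(r) (m - K r^α)` with `c(r) > 0`
and `K = 1 - q (p + α) / α > 0`, so `F` increases up to `r* = (m / K)^(1/α)` and decreases after
it; `r*` lies in the support since `1 - (q / α) r*^α = (1 - q (n + α) / α) / K > 0`.
`F` is continuous with `F 0 = 0`; for `q > 0` it vanishes from `R` on, because the exponent
`1/q - n/α - 1` is positive, and for `q ≤ 0` it tends to `0` at infinity, because `g` is dominated
by `(1 + r)^(-β)` with `β > n`, the bound that also makes `Z` finite. The solutions of `F r = c`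
are then counted by the intermediate value theorem on the two monotone branches.
-/

open Set Topology

section Unimodal

variable {F : ℝ → ℝ} {S : Set ℝ} {r₀ : ℝ}

theorem strictMonoOn_Ioc_and_strictAntiOn_Ici_of_hasDerivAt (hS : S.OrdConnected)
    (hr₀S : Ioc 0 r₀ ⊆ S)
    (hF : ∀ r ∈ S, ∃ d, HasDerivAt F d r ∧ (r < r₀ → 0 < d) ∧ (r₀ < r → d < 0)) :
    StrictMonoOn F (Ioc 0 r₀) ∧ StrictAntiOn F (S ∩ Ici r₀) := by
  have hcont : ContinuousOn F S := fun r hr =>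
    (hF r hr).choose_spec.1.continuousAt.continuousWithinAt
  constructor
  · refine strictMonoOn_of_deriv_pos (convex_Ioc 0 r₀) (hcont.mono hr₀S) fun r hr => ?_
    rw [interior_Ioc] at hr
    obtain ⟨d, hd, hpos, -⟩ := hF r (hr₀S (Ioo_subset_Ioc_self hr))
    exact hd.deriv ▸ hpos hr.2
  · refine strictAntiOn_of_deriv_neg (hS.inter ordConnected_Ici).convex
      (hcont.mono inter_subset_left) fun r hr => ?_
    rw [interior_inter, interior_Ici] at hr
    obtain ⟨d, hd, -, hneg⟩ := hF r (interior_subset hr.1)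
    exact hd.deriv ▸ hneg hr.2

theorem eq_of_strictMonoOn_Ioc_of_strictAntiOn_Ici (hS : S ⊆ Ioi 0) (hr₀ : r₀ ∈ S)
    (hmono : StrictMonoOn F (Ioc 0 r₀)) (hanti : StrictAntiOn F (S ∩ Ici r₀))
    {r₁ : ℝ} (hr₁ : r₁ ∈ S) (hmono₁ : StrictMonoOn F (Ioc 0 r₁))
    (hanti₁ : StrictAntiOn F (S ∩ Ici r₁)) : r₁ = r₀ := by
  rcases lt_trichotomy r₁ r₀ with h | h | h
  · exact absurd (hmono ⟨hS hr₁, h.le⟩ ⟨hS hr₀, le_rfl⟩ h)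
      (hanti₁ ⟨hr₁, self_mem_Ici⟩ ⟨hr₀, h.le⟩ h).asymm
  · exact h
  · exact absurd (hmono₁ ⟨hS hr₀, h.le⟩ ⟨hS hr₁, le_rfl⟩ h)
      (hanti ⟨hr₀, self_mem_Ici⟩ ⟨hr₁, h.le⟩ h).asymm

theorem apply_le_of_strictMonoOn_Ioc_of_strictAntiOn_Ici (hr₀ : r₀ ∈ S)
    (hmono : StrictMonoOn F (Ioc 0 r₀)) (hanti : StrictAntiOn F (S ∩ Ici r₀))
    (hzero : ∀ r, 0 < r → r ∉ S → F r = 0) (hF₀ : 0 ≤ F r₀) {r : ℝ} (hr : 0 < r) :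
    F r ≤ F r₀ := by
  rcases le_or_gt r r₀ with h | h
  · exact hmono.monotoneOn ⟨hr, h⟩ ⟨hr.trans_le h, le_rfl⟩ h
  by_cases hrS : r ∈ S
  · exact hanti.antitoneOn ⟨hr₀, self_mem_Ici⟩ ⟨hrS, h.le⟩ h.le
  · exact (hzero r hr hrS).trans_le hF₀

theorem eq_or_eq_of_strictMonoOn_Ioc_of_strictAntiOn_Ici
    (hmono : StrictMonoOn F (Ioc 0 r₀)) (hanti : StrictAntiOn F (S ∩ Ici r₀))
    (hzero : ∀ r, 0 < r → r ∉ S → F r = 0) {r₁ r₂ : ℝ} (hr₁ : r₁ ∈ Ioc 0 r₀)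
    (hr₂ : r₂ ∈ S ∩ Ici r₀) (hF : F r₁ = F r₂) (hF₁ : F r₁ ≠ 0) {r : ℝ} (hr : 0 < r)
    (hFr : F r = F r₁) : r = r₁ ∨ r = r₂ := by
  rcases le_or_gt r r₀ with h | h
  · exact .inl (hmono.injOn ⟨hr, h⟩ hr₁ hFr)
  by_cases hrS : r ∈ S
  · exact .inr (hanti.injOn ⟨hrS, h.le⟩ hr₂ (hFr.trans hF))
  · exact absurd (hFr ▸ hzero r hr hrS) hF₁

theorem exists_two_preimages_of_strictMonoOn_Ioc_of_strictAntiOn_Ici (hr₀ : 0 < r₀)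
    (hS : S.OrdConnected) (hr₀S : Ioc 0 r₀ ⊆ S) (hcont : ContinuousOn F S)
    (hmono : StrictMonoOn F (Ioc 0 r₀)) (hanti : StrictAntiOn F (S ∩ Ici r₀))
    (hzero : ∀ r, 0 < r → r ∉ S → F r = 0) (hleft : Tendsto F (𝓝[>] 0) (𝓝 0))
    (hright : ∀ c, 0 < c → ∃ r ∈ S, r₀ < r ∧ F r < c) {c : ℝ} (hc : 0 < c)
    (hcF : c < F r₀) :
    ∃ r₁ r₂ : ℝ, 0 < r₁ ∧ 0 < r₂ ∧ r₁ ≠ r₂ ∧ F r₁ = c ∧ F r₂ = c ∧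
      ∀ r : ℝ, 0 < r → F r = c → r = r₁ ∨ r = r₂ := by
  obtain ⟨a, hFa, ha⟩ := ((hleft.eventually (gt_mem_nhds hc)).and
    (Ioo_mem_nhdsGT hr₀)).exists
  obtain ⟨b, hbS, hb, hFb⟩ := hright c hc
  have hIcc_a : Icc a r₀ ⊆ Ioc 0 r₀ := Icc_subset_Ioc ha.1 le_rfl
  have hIcc_b : Icc r₀ b ⊆ S ∩ Ici r₀ := fun x hx =>
    ⟨hS.out (hr₀S ⟨hr₀, le_rfl⟩) hbS hx, hx.1⟩
  obtain ⟨r₁, hr₁, hFr₁⟩ := intermediate_value_Icc ha.2.le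
    (hcont.mono (hIcc_a.trans hr₀S)) ⟨hFa.le, hcF.le⟩
  obtain ⟨r₂, hr₂, hFr₂⟩ := intermediate_value_Icc' hb.le
    (hcont.mono fun x hx => (hIcc_b hx).1) ⟨hFb.le, hcF.le⟩
  have hr₁r₀ : r₁ < r₀ := hr₁.2.lt_of_ne (by rintro rfl; exact hcF.ne' hFr₁)
  have hr₀r₂ : r₀ < r₂ := hr₂.1.lt_of_ne (by rintro rfl; exact hcF.ne hFr₂.symm)
  refine ⟨r₁, r₂, hIcc_a hr₁ |>.1, hr₀.trans hr₀r₂, (hr₁r₀.trans hr₀r₂).ne, hFr₁, hFr₂,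
    fun r hr hFr => ?_⟩
  exact eq_or_eq_of_strictMonoOn_Ioc_of_strictAntiOn_Ici hmono hanti hzero (hIcc_a hr₁)
    (hIcc_b hr₂) (hFr₁.trans hFr₂.symm) (hFr₁ ▸ hc.ne') hr (hFr.trans hFr₁.symm)

theorem preimage_count_of_strictMonoOn_Ioc_of_strictAntiOn_Ici (hr₀ : 0 < r₀)
    (hS : S.OrdConnected) (hr₀S : Ioc 0 r₀ ⊆ S) (hcont : ContinuousOn F S)
    (hmono : StrictMonoOn F (Ioc 0 r₀)) (hanti : StrictAntiOn F (S ∩ Ici r₀))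
    (hzero : ∀ r, 0 < r → r ∉ S → F r = 0) (hleft : Tendsto F (𝓝[>] 0) (𝓝 0))
    (hright : ∀ c, 0 < c → ∃ r ∈ S, r₀ < r ∧ F r < c) (hpeak : 0 < F r₀) (c : ℝ) :
    (0 < c → c < F r₀ →
      ∃ r₁ r₂ : ℝ, 0 < r₁ ∧ 0 < r₂ ∧ r₁ ≠ r₂ ∧ F r₁ = c ∧ F r₂ = c ∧
        ∀ r : ℝ, 0 < r → F r = c → r = r₁ ∨ r = r₂) ∧
    (c = F r₀ → ∃! r : ℝ, 0 < r ∧ F r = c) ∧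
    (F r₀ < c → ∀ r : ℝ, 0 < r → F r ≠ c) := by
  have hr₀S' : r₀ ∈ S := hr₀S ⟨hr₀, le_rfl⟩
  refine ⟨exists_two_preimages_of_strictMonoOn_Ioc_of_strictAntiOn_Ici hr₀ hS hr₀S hcont hmono
    hanti hzero hleft hright, fun hc => ⟨r₀, ⟨hr₀, hc.symm⟩, fun r ⟨hr, hFr⟩ => ?_⟩,
    fun hc r hr hFr => ?_⟩
  · exact (eq_or_eq_of_strictMonoOn_Ioc_of_strictAntiOn_Ici hmono hanti hzero ⟨hr₀, le_rfl⟩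
      ⟨hr₀S', self_mem_Ici⟩ rfl hpeak.ne' hr (hFr.trans hc)).elim id id
  · exact (apply_le_of_strictMonoOn_Ioc_of_strictAntiOn_Ici hr₀S' hmono hanti hzero hpeak.le
      hr).not_gt (hc.trans_eq hFr.symm)

end Unimodal

section Profile

variable {n : ℕ} {α q r : ℝ}

lemma one_le_one_sub_div_mul_rpow (hα : 0 < α) (hq : q ≤ 0) (hr : 0 ≤ r) :
    1 ≤ 1 - q / α * r ^ α := by
  have : q / α * r ^ α ≤ 0 :=
    mul_nonpos_of_nonpos_of_nonneg (div_nonpos_of_nonpos_of_nonneg hq hα.le) (rpow_nonneg hr α)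
  linarith

lemma gProfile_nonneg : 0 ≤ gProfile n α q r := by
  unfold gProfile
  split_ifs
  · exact (exp_pos _).le
  · exact rpow_nonneg (le_max_right _ _) _

lemma gProfile_pos (h : 0 < 1 - q / α * r ^ α) : 0 < gProfile n α q r := by
  unfold gProfile
  split_ifs
  · exact exp_pos _
  · rw [max_eq_left h.le]
    exact rpow_pos_of_pos h _

lemma gProfile_of_ne_zero (hq : q ≠ 0) (h : 0 ≤ 1 - q / α * r ^ α) :
    gProfile n α q r = (1 - q / α * r ^ α) ^ (1 / q - (n : ℝ) / α - 1) := by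
  rw [gProfile, if_neg hq, max_eq_left h]

lemma one_div_sub_div_sub_one_pos (hα : 0 < α) (hq₀ : 0 < q) (hq : q < α / ((n : ℝ) + α)) :
    0 < 1 / q - (n : ℝ) / α - 1 := by
  have h : q * ((n : ℝ) + α) < α := (lt_div_iff₀ (by positivity)).mp hq
  have heq : 1 / q - (n : ℝ) / α - 1 = (α - q * ((n : ℝ) + α)) / (q * α) := by
    field_simp
    ring
  rw [heq]
  exact div_pos (by linarith) (by positivity)

lemma one_div_sub_div_sub_one_neg (hα : 0 < α) (hq₀ : q < 0) : 1 / q - (n : ℝ) / α - 1 < 0 := by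
  have : 1 / q < 0 := one_div_neg.mpr hq₀
  have : 0 ≤ (n : ℝ) / α := by positivity
  linarith

lemma gProfile_eq_zero (hα : 0 < α) (hq : q < α / ((n : ℝ) + α))
    (h : 1 - q / α * r ^ α ≤ 0) : gProfile n α q r = 0 := by
  have hq₀ : q ≠ 0 := by
    rintro rfl
    norm_num at h
  rw [gProfile, if_neg hq₀, max_eq_right h, zero_rpow]
  rcases hq₀.lt_or_gt with hq₀ | hq₀
  · exact (one_div_sub_div_sub_one_neg hα hq₀).ne
  · exact (one_div_sub_div_sub_one_pos hα hq₀ hq).ne'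

lemma continuous_gProfile_norm {E : Type*} [SeminormedAddCommGroup E] (hα : 0 < α)
    (hq : q < α / ((n : ℝ) + α)) : Continuous fun x : E => gProfile n α q ‖x‖ := by
  have hpow : Continuous fun x : E => ‖x‖ ^ α := continuous_norm.rpow_const fun _ => .inr hα.le
  unfold gProfile
  split_ifs with hq₀
  · fun_prop
  refine ((continuous_const.sub (continuous_const.mul hpow)).max continuous_const).rpow_const
    fun x => ?_
  rcases Ne.lt_or_gt hq₀ with hq₀ | hq₀
  · exact .inl (one_pos.trans_le ((one_le_one_sub_div_mul_rpow hα hq₀.le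
      (norm_nonneg x)).trans (le_max_left _ _))).ne'
  · exact .inr (one_div_sub_div_sub_one_pos hα hq₀ hq).le

end Profile

section Decay

variable {n : ℕ} {α q r : ℝ}

lemma one_add_rpow_le_two_rpow_mul (hα : 0 ≤ α) (hr : 0 ≤ r) :
    (1 + r) ^ α ≤ 2 ^ α * (1 + r ^ α) := by
  rcases le_total r 1 with h | h
  · calc (1 + r) ^ α ≤ 2 ^ α := rpow_le_rpow (by linarith) (by linarith) hα
      _ ≤ 2 ^ α * (1 + r ^ α) :=
        le_mul_of_one_le_right (by positivity) (by linarith [rpow_nonneg hr α])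
  · calc (1 + r) ^ α ≤ (2 * r) ^ α := rpow_le_rpow (by linarith) (by linarith) hα
      _ = 2 ^ α * r ^ α := mul_rpow zero_le_two hr
      _ ≤ 2 ^ α * (1 + r ^ α) := by gcongr; linarith

lemma one_add_mul_rpow_rpow_neg_le (hα : 0 ≤ α) {c s : ℝ} (hc : 0 < c) (hs : 0 ≤ s) :
    ∃ C, ∀ r, 0 ≤ r → (1 + c * r ^ α) ^ (-s) ≤ C * (1 + r) ^ (-(α * s)) := by
  set d := min 1 c / 2 ^ α
  have hd : 0 < d := div_pos (lt_min one_pos hc) (by positivity)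
  refine ⟨d ^ (-s), fun r hr => ?_⟩
  have hlower : d * (1 + r) ^ α ≤ 1 + c * r ^ α := by
    have hr' := rpow_nonneg hr α
    calc d * (1 + r) ^ α ≤ d * (2 ^ α * (1 + r ^ α)) := by
          gcongr
          exact one_add_rpow_le_two_rpow_mul hα hr
      _ = min 1 c * (1 + r ^ α) := by simp only [d]; field_simp
      _ ≤ 1 + c * r ^ α := by
          nlinarith [min_le_left 1 c, min_le_right 1 c]
  calc (1 + c * r ^ α) ^ (-s) ≤ (d * (1 + r) ^ α) ^ (-s) :=
        rpow_le_rpow_of_nonpos (by positivity) hlower (neg_nonpos.mpr hs)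
    _ = d ^ (-s) * (1 + r) ^ (-(α * s)) := by
        rw [mul_rpow hd.le (by positivity), ← rpow_mul (by linarith), mul_neg]

lemma gProfile_le_one_add_mul_rpow (hα : 0 < α) (hq : q ≤ 0) :
    ∃ c s, 0 < c ∧ (n : ℝ) < α * s ∧
      ∀ r, 0 ≤ r → gProfile n α q r ≤ (1 + c * r ^ α) ^ (-s) := by
  rcases hq.lt_or_eq with hq | rfl
  · refine ⟨-(q / α), -(1 / q - (n : ℝ) / α - 1), neg_pos.mpr (div_neg_of_neg_of_pos hq hα),
      ?_, fun r hr => ?_⟩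
    · have : α * -(1 / q - (n : ℝ) / α - 1) = n + α - α / q := by
        field_simp
        ring
      linarith [div_neg_of_pos_of_neg hα hq]
    · rw [gProfile_of_ne_zero hq.ne (by linarith [one_le_one_sub_div_mul_rpow hα hq.le hr]),
        neg_neg, neg_mul, ← sub_eq_add_neg]
  · -- `(1 + x / k) ^ k ≤ exp x` turns the Gaussian tail into a polynomial one of any order `k`
    set k : ℕ := ⌊(n : ℝ) / α⌋₊ + 1
    have hk : (0 : ℝ) < k := by positivity
    refine ⟨(α * k)⁻¹, k, by positivity, ?_, fun r hr => ?_⟩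
    · have := Nat.lt_floor_add_one ((n : ℝ) / α)
      push_cast [k] at this ⊢
      rwa [div_lt_iff₀' hα] at this
    set x := r ^ α / α
    have hx : 0 ≤ x := by positivity
    have hbase : 1 + (α * k)⁻¹ * r ^ α = 1 + x / k := by
      simp only [x]
      field_simp
    have hexp : (1 + x / k) ^ k ≤ exp x := by
      simpa [neg_div] using one_sub_div_pow_le_exp_neg (n := k) (t := -x) (by linarith)
    rw [gProfile, if_pos rfl, hbase, rpow_neg (by positivity), rpow_natCast, neg_div,
      exp_neg]
    exact inv_anti₀ (by positivity) hexp

lemma gProfile_le_one_add_rpow (hα : 0 < α) (hq : q ≤ 0) :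
    ∃ C β, (n : ℝ) < β ∧ ∀ r, 0 ≤ r → gProfile n α q r ≤ C * (1 + r) ^ (-β) := by
  obtain ⟨c, s, hc, hs, hg⟩ := gProfile_le_one_add_mul_rpow (n := n) hα hq
  have hs₀ : 0 ≤ s := (pos_of_mul_pos_right (n.cast_nonneg.trans_lt hs) hα.le).le
  obtain ⟨C, hC⟩ := one_add_mul_rpow_rpow_neg_le hα.le hc hs₀
  exact ⟨C, α * s, hs, fun r hr => (hg r hr).trans (hC r hr)⟩

end Decay

section Normalization

variable {n : ℕ} {α q : ℝ}

theorem integrable_gProfile_norm (hα : 0 < α) (hq : q < α / ((n : ℝ) + α)) :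
    Integrable fun x : EuclideanSpace ℝ (Fin n) => gProfile n α q ‖x‖ := by
  have hcont := continuous_gProfile_norm (E := EuclideanSpace ℝ (Fin n)) hα hq
  rcases le_or_gt q 0 with hq₀ | hq₀
  · obtain ⟨C, β, hβ, hg⟩ := gProfile_le_one_add_rpow (n := n) hα hq₀
    refine ((integrable_one_add_norm (by simpa using hβ)).const_mul C).mono'
      hcont.aestronglyMeasurable (.of_forall fun x => ?_)
    rw [norm_of_nonneg gProfile_nonneg]
    exact hg ‖x‖ (norm_nonneg x)
  · refine hcont.integrable_of_hasCompactSupport <|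
      HasCompactSupport.intro (isCompact_closedBall 0 ((α / q) ^ (1 / α))) fun x hx => ?_
    rw [Metric.mem_closedBall, dist_zero_right, not_le, one_div,
      rpow_inv_lt_iff_of_pos (by positivity) (norm_nonneg x) hα] at hx
    refine gProfile_eq_zero hα hq ?_
    rw [sub_nonpos, div_mul_eq_mul_div, le_div_iff₀ hα, one_mul, ← div_le_iff₀' hq₀]
    exact hx.le

theorem Zconst_pos (hα : 0 < α) (hq : q < α / ((n : ℝ) + α)) : 0 < Zconst n α q := by
  have hcont := continuous_gProfile_norm (E := EuclideanSpace ℝ (Fin n)) hα hq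
  have h₀ : (0 : EuclideanSpace ℝ (Fin n)) ∈ Function.support fun x => gProfile n α q ‖x‖ :=
    (gProfile_pos (by simp [zero_rpow hα.ne'])).ne'
  rw [Zconst, integral_pos_iff_support_of_nonneg (fun _ => gProfile_nonneg)
    (integrable_gProfile_norm hα hq)]
  exact hcont.isOpen_support.measure_pos volume ⟨0, h₀⟩

end Normalization

section Derivative

variable {n : ℕ} {p α q r : ℝ}

theorem hasDerivAt_gProfile (hα : α ≠ 0) (hr : r ≠ 0) (hu : 0 < 1 - q / α * r ^ α) :
    ∃ w > 0, gProfile n α q r = (1 - q / α * r ^ α) * w ∧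
      HasDerivAt (gProfile n α q) (-((1 - q * (n + α) / α) * r ^ (α - 1) * w)) r := by
  have hpow : HasDerivAt (fun x => x ^ α) (α * r ^ (α - 1)) r :=
    hasDerivAt_rpow_const (.inl hr)
  rcases eq_or_ne q 0 with rfl | hq
  · refine ⟨exp (-(r ^ α) / α), exp_pos _, by simp [gProfile], ?_⟩
    have hg : gProfile n α 0 = fun x => exp (-(x ^ α) / α) := by
      funext x
      simp [gProfile]
    rw [hg]
    refine (hpow.neg.div_const α).exp.congr_deriv ?_
    simp only [Pi.neg_apply]
    field_simp
    ring
  set ex := 1 / q - (n : ℝ) / α - 1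
  refine ⟨(1 - q / α * r ^ α) ^ (ex - 1), rpow_pos_of_pos hu _, ?_, ?_⟩
  · rw [gProfile_of_ne_zero hq hu.le]
    conv_rhs => rw [rpow_sub_one hu.ne', mul_div_cancel₀ _ hu.ne']
  have hbase : HasDerivAt (fun x => 1 - q / α * x ^ α) (-(q / α * (α * r ^ (α - 1)))) r :=
    (hpow.const_mul _).const_sub 1
  refine ((hbase.rpow_const (p := ex) (.inl hu.ne')).congr_of_eventuallyEq ?_).congr_deriv ?_
  · filter_upwards [hbase.continuousAt.preimage_mem_nhds (Ioi_mem_nhds hu)] with x hx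
    exact gProfile_of_ne_zero hq (le_of_lt hx)
  · simp only [ex]
    field_simp
    ring

theorem hasDerivAt_rpow_mul_gProfile (hα : α ≠ 0) (hr : 0 < r) (hu : 0 < 1 - q / α * r ^ α) :
    ∃ c > 0, HasDerivAt (fun x => x ^ ((n : ℝ) - p) * gProfile n α q x)
      (c * (((n : ℝ) - p) - (1 - q * (p + α) / α) * r ^ α)) r := by
  obtain ⟨w, hw, hg, hdg⟩ := hasDerivAt_gProfile (n := n) hα hr.ne' hu
  refine ⟨r ^ ((n : ℝ) - p - 1) * w, by positivity, ?_⟩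
  refine ((hasDerivAt_rpow_const (p := (n : ℝ) - p) (.inl hr.ne')).mul hdg).congr_deriv ?_
  rw [hg, rpow_sub_one hr.ne', rpow_sub_one hr.ne']
  field_simp
  ring

end Derivative

section Support

variable {α q r : ℝ}

def radialSupport (α q : ℝ) : Set ℝ :=
  if 0 < q then Ioo 0 ((α / q) ^ (1 / α)) else Ioi 0

lemma radialSupport_of_pos (hq : 0 < q) : radialSupport α q = Ioo 0 ((α / q) ^ (1 / α)) :=
  if_pos hq

lemma radialSupport_of_nonpos (hq : q ≤ 0) : radialSupport α q = Ioi 0 :=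
  if_neg hq.not_gt

lemma mem_radialSupport (hα : 0 < α) :
    r ∈ radialSupport α q ↔ 0 < r ∧ 0 < 1 - q / α * r ^ α := by
  rcases lt_or_ge 0 q with hq | hq
  · rw [radialSupport_of_pos hq, mem_Ioo, and_congr_right_iff]
    intro hr
    rw [one_div, lt_rpow_inv_iff_of_pos hr.le (by positivity) hα, sub_pos, div_mul_eq_mul_div,
      div_lt_one hα, ← lt_div_iff₀' hq]
  · rw [radialSupport_of_nonpos hq, mem_Ioi, iff_self_and]
    intro hr
    linarith [one_le_one_sub_div_mul_rpow hα hq hr.le]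

lemma radialSupport_subset_Ioi : radialSupport α q ⊆ Ioi 0 := by
  unfold radialSupport
  split_ifs
  exacts [Ioo_subset_Ioi_self, subset_rfl]

lemma ordConnected_radialSupport : (radialSupport α q).OrdConnected := by
  unfold radialSupport
  split_ifs <;> infer_instance

lemma Ioc_subset_radialSupport (hr : r ∈ radialSupport α q) : Ioc 0 r ⊆ radialSupport α q := by
  unfold radialSupport at *
  split_ifs at *
  exacts [Ioc_subset_Ioo_right hr.2, Ioc_subset_Ioi_self]

lemma exists_mem_radialSupport_gt_apply_lt {F : ℝ → ℝ} {r₀ : ℝ} (hr₀ : r₀ ∈ radialSupport α q)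
    (hR : 0 < q → Tendsto F (𝓝[<] ((α / q) ^ (1 / α))) (𝓝 0))
    (htop : q ≤ 0 → Tendsto F atTop (𝓝 0)) {c : ℝ} (hc : 0 < c) :
    ∃ r ∈ radialSupport α q, r₀ < r ∧ F r < c := by
  rcases lt_or_ge 0 q with hq | hq
  · rw [radialSupport_of_pos hq] at hr₀ ⊢
    obtain ⟨r, hFr, hr⟩ :=
      (((hR hq).eventually (gt_mem_nhds hc)).and (Ioo_mem_nhdsLT hr₀.2)).exists
    exact ⟨r, ⟨hr₀.1.trans hr.1, hr.2⟩, hr.1, hFr⟩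
  · rw [radialSupport_of_nonpos hq] at hr₀ ⊢
    obtain ⟨r, hFr, hr⟩ :=
      (((htop hq).eventually (gt_mem_nhds hc)).and (eventually_gt_atTop r₀)).exists
    exact ⟨r, mem_Ioi.2 (hr₀.trans hr), hr, hFr⟩

end Support

section Peak

variable {n : ℕ} {p α q r : ℝ}

/-- The zero of the sign factor `(n - p) - (1 - q (p + α) / α) r ^ α` of `F'`. -/
noncomputable def peakRadius (n : ℕ) (p α q : ℝ) : ℝ :=
  (((n : ℝ) - p) / (1 - q * (p + α) / α)) ^ (1 / α)

lemma sub_mul_rpow_pos_iff {m K : ℝ} (hα : 0 < α) (hm : 0 ≤ m) (hK : 0 < K) (hr : 0 ≤ r) :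
    0 < m - K * r ^ α ↔ r < (m / K) ^ (1 / α) := by
  rw [sub_pos, ← lt_div_iff₀' hK, one_div, lt_rpow_inv_iff_of_pos hr (div_nonneg hm hK.le) hα]

lemma sub_mul_rpow_neg_iff {m K : ℝ} (hα : 0 < α) (hm : 0 ≤ m) (hK : 0 < K) (hr : 0 ≤ r) :
    m - K * r ^ α < 0 ↔ (m / K) ^ (1 / α) < r := by
  rw [sub_neg, ← div_lt_iff₀' hK, one_div, rpow_inv_lt_iff_of_pos (div_nonneg hm hK.le) hr hα]

lemma one_sub_mul_add_div_pos (hα : 0 < α) (hp : 0 ≤ p) (hpn : p < n)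
    (hq : q < α / ((n : ℝ) + α)) : 0 < 1 - q * (p + α) / α := by
  have hqn : q * ((n : ℝ) + α) < α := (lt_div_iff₀ (by positivity)).mp hq
  rw [sub_pos, div_lt_one hα]
  rcases le_or_gt q 0 with hq₀ | hq₀ <;> nlinarith

lemma peakRadius_mem_radialSupport (hα : 0 < α) (hp : 0 ≤ p) (hpn : p < n)
    (hq : q < α / ((n : ℝ) + α)) : peakRadius n p α q ∈ radialSupport α q := by
  have hK := one_sub_mul_add_div_pos hα hp hpn hq
  have hm : 0 < (n : ℝ) - p := sub_pos.2 hpn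
  have hL : 0 < 1 - q * ((n : ℝ) + α) / α := by
    rw [sub_pos, div_lt_one hα]
    exact (lt_div_iff₀ (by positivity)).mp hq
  have hbase : 1 - q / α * peakRadius n p α q ^ α =
      (1 - q * ((n : ℝ) + α) / α) / (1 - q * (p + α) / α) := by
    rw [peakRadius, one_div, rpow_inv_rpow (div_pos hm hK).le hα.ne', eq_div_iff hK.ne',
      sub_mul, mul_assoc, div_mul_cancel₀ _ hK.ne']
    ring
  rw [mem_radialSupport hα, hbase]
  exact ⟨rpow_pos_of_pos (div_pos hm hK) _, div_pos hL hK⟩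

end Peak

section Isotropic

variable {n : ℕ} {p α q r : ℝ} {e : EuclideanSpace ℝ (Fin n)}

lemma gGauss_smul (he : ‖e‖ = 1) (hr : 0 ≤ r) :
    gGauss n α q (r • e) = (Zconst n α q)⁻¹ * gProfile n α q r := by
  rw [gGauss, norm_smul, he, mul_one, norm_of_nonneg hr]

lemma continuous_rpow_mul_gGauss_smul (hα : 0 < α) (hq : q < α / ((n : ℝ) + α))
    (hpn : p ≤ n) : Continuous fun r : ℝ => r ^ ((n : ℝ) - p) * gGauss n α q (r • e) :=
  (continuous_rpow_const (sub_nonneg.2 hpn)).mul <| continuous_const.mul <|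
    (continuous_gProfile_norm hα hq).comp (continuous_id.smul continuous_const)

lemma rpow_mul_gGauss_smul_pos (hα : 0 < α) (hq : q < α / ((n : ℝ) + α)) (he : ‖e‖ = 1)
    (hr : r ∈ radialSupport α q) : 0 < r ^ ((n : ℝ) - p) * gGauss n α q (r • e) := by
  obtain ⟨hr₀, hu⟩ := (mem_radialSupport hα).1 hr
  rw [gGauss_smul he hr₀.le]
  exact mul_pos (rpow_pos_of_pos hr₀ _) (mul_pos (inv_pos.2 (Zconst_pos hα hq)) (gProfile_pos hu))

lemma rpow_mul_gGauss_smul_eq_zero (hα : 0 < α) (hq : q < α / ((n : ℝ) + α)) (he : ‖e‖ = 1)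
    (hr : 0 < r) (hrS : r ∉ radialSupport α q) :
    r ^ ((n : ℝ) - p) * gGauss n α q (r • e) = 0 := by
  rw [mem_radialSupport hα, not_and, not_lt] at hrS
  rw [gGauss_smul he hr.le, gProfile_eq_zero hα hq (hrS hr), mul_zero, mul_zero]

lemma hasDerivAt_rpow_mul_gGauss_smul (hα : 0 < α) (hp : 0 ≤ p) (hpn : p < n)
    (hq : q < α / ((n : ℝ) + α)) (he : ‖e‖ = 1) (hr : r ∈ radialSupport α q) :
    ∃ d, HasDerivAt (fun r : ℝ => r ^ ((n : ℝ) - p) * gGauss n α q (r • e)) d r ∧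
      (r < peakRadius n p α q → 0 < d) ∧ (peakRadius n p α q < r → d < 0) := by
  obtain ⟨hr₀, hu⟩ := (mem_radialSupport hα).1 hr
  obtain ⟨c, hc, hd⟩ := hasDerivAt_rpow_mul_gProfile (n := n) (p := p) hα.ne' hr₀ hu
  have hcZ : 0 < (Zconst n α q)⁻¹ * c := mul_pos (inv_pos.2 (Zconst_pos hα hq)) hc
  have hm : 0 ≤ (n : ℝ) - p := sub_nonneg.2 hpn.le
  have hK := one_sub_mul_add_div_pos hα hp hpn hq
  refine ⟨(Zconst n α q)⁻¹ * c * (((n : ℝ) - p) - (1 - q * (p + α) / α) * r ^ α), ?_,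
    fun h => mul_pos hcZ ((sub_mul_rpow_pos_iff hα hm hK hr₀.le).2 h),
    fun h => mul_neg_of_pos_of_neg hcZ ((sub_mul_rpow_neg_iff hα hm hK hr₀.le).2 h)⟩
  rw [mul_assoc]
  refine (hd.const_mul _).congr_of_eventuallyEq ?_
  filter_upwards [Ioi_mem_nhds hr₀] with x hx
  rw [gGauss_smul he (le_of_lt hx), mul_left_comm]

lemma tendsto_rpow_mul_gGauss_smul_atTop (hα : 0 < α) (hp : 0 ≤ p) (hpn : p ≤ n) (hq : q ≤ 0)
    (he : ‖e‖ = 1) :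
    Tendsto (fun r : ℝ => r ^ ((n : ℝ) - p) * gGauss n α q (r • e)) atTop (𝓝 0) := by
  obtain ⟨C, β, hβ, hg⟩ := gProfile_le_one_add_rpow (n := n) hα hq
  have hZ : 0 ≤ (Zconst n α q)⁻¹ := inv_nonneg.2 (integral_nonneg fun _ => gProfile_nonneg)
  have hlim : Tendsto (fun r : ℝ => (Zconst n α q)⁻¹ * C * (1 + r) ^ ((n : ℝ) - p + -β))
      atTop (𝓝 0) := by
    have h := (tendsto_rpow_neg_atTop (y := β - ((n : ℝ) - p)) (by linarith)).comp
      (tendsto_atTop_add_const_left atTop 1 tendsto_id)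
    simpa [Function.comp_def, neg_sub, sub_eq_add_neg, add_comm] using
      h.const_mul ((Zconst n α q)⁻¹ * C)
  refine tendsto_of_tendsto_of_tendsto_of_le_of_le' tendsto_const_nhds hlim ?_ ?_
  all_goals filter_upwards [eventually_ge_atTop 0] with r hr
  · rw [gGauss_smul he hr]
    exact mul_nonneg (rpow_nonneg hr _) (mul_nonneg hZ gProfile_nonneg)
  · rw [gGauss_smul he hr, rpow_add (by linarith), mul_left_comm, mul_assoc]
    refine mul_le_mul_of_nonneg_left ?_ hZ
    calc r ^ ((n : ℝ) - p) * gProfile n α q r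
        ≤ (1 + r) ^ ((n : ℝ) - p) * (C * (1 + r) ^ (-β)) :=
          mul_le_mul (rpow_le_rpow hr (by linarith) (sub_nonneg.2 hpn)) (hg r hr)
            gProfile_nonneg (rpow_nonneg (by linarith) _)
      _ = C * ((1 + r) ^ ((n : ℝ) - p) * (1 + r) ^ (-β)) := by ring

lemma rpow_mul_gGauss_smul_eq_zero_of_le (hα : 0 < α) (hq : q < α / ((n : ℝ) + α))
    (he : ‖e‖ = 1) (hq₀ : 0 < q) (hr : (α / q) ^ (1 / α) ≤ r) :
    r ^ ((n : ℝ) - p) * gGauss n α q (r • e) = 0 :=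
  rpow_mul_gGauss_smul_eq_zero hα hq he ((rpow_pos_of_pos (div_pos hα hq₀) _).trans_le hr)
    fun hrS => hr.not_gt (radialSupport_of_pos hq₀ ▸ hrS).2

lemma tendsto_rpow_mul_gGauss_smul_nhdsGT_zero (hα : 0 < α) (hq : q < α / ((n : ℝ) + α))
    (hpn : p < n) :
    Tendsto (fun r : ℝ => r ^ ((n : ℝ) - p) * gGauss n α q (r • e)) (𝓝[>] 0) (𝓝 0) := by
  simpa [zero_rpow (sub_pos.2 hpn).ne'] using
    ((continuous_rpow_mul_gGauss_smul hα hq hpn.le).tendsto 0).mono_left nhdsWithin_le_nhds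

lemma tendsto_rpow_mul_gGauss_smul_nhdsLT (hα : 0 < α) (hq : q < α / ((n : ℝ) + α))
    (hpn : p ≤ n) (he : ‖e‖ = 1) (hq₀ : 0 < q) :
    Tendsto (fun r : ℝ => r ^ ((n : ℝ) - p) * gGauss n α q (r • e))
      (𝓝[<] ((α / q) ^ (1 / α))) (𝓝 0) :=
  rpow_mul_gGauss_smul_eq_zero_of_le hα hq he hq₀ le_rfl ▸
    ((continuous_rpow_mul_gGauss_smul hα hq hpn).tendsto _).mono_left nhdsWithin_le_nhds

end Isotropic

theorem isotropic_constant_solution_count_general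
    (n : ℕ) (p α q : ℝ) (hp1 : 1 ≤ p) (hpn : p < (n : ℝ))
    (hα : 0 < α) (hq : q < α / ((n : ℝ) + α))
    (e : EuclideanSpace ℝ (Fin n)) (he : ‖e‖ = 1)
    (F : ℝ → ℝ) (hF : F = fun r => r ^ ((n : ℝ) - p) * gGauss n α q (r • e))
    (S : Set ℝ)
    (hS : S = if 0 < q then Set.Ioo (0 : ℝ) ((α / q) ^ (1 / α)) else Set.Ioi (0 : ℝ)) :
    Filter.Tendsto F (nhdsWithin 0 (Set.Ioi 0)) (nhds 0) ∧
    (0 < q → Filter.Tendsto F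
      (nhdsWithin ((α / q) ^ (1 / α)) (Set.Iio ((α / q) ^ (1 / α)))) (nhds 0)) ∧
    (q ≤ 0 → Filter.Tendsto F Filter.atTop (nhds 0)) ∧
    (0 < q → ∀ r : ℝ, (α / q) ^ (1 / α) ≤ r → F r = 0) ∧
    ∃ rstar ∈ S,
      (StrictMonoOn F (Set.Ioc 0 rstar) ∧ StrictAntiOn F (S ∩ Set.Ici rstar)) ∧
      (∀ r' ∈ S,
        (StrictMonoOn F (Set.Ioc 0 r') ∧ StrictAntiOn F (S ∩ Set.Ici r')) → r' = rstar) ∧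
      0 < F rstar ∧
      ∀ c : ℝ,
        (0 < c → c < F rstar →
          ∃ r₁ r₂ : ℝ, 0 < r₁ ∧ 0 < r₂ ∧ r₁ ≠ r₂ ∧ F r₁ = c ∧ F r₂ = c ∧
            ∀ r : ℝ, 0 < r → F r = c → r = r₁ ∨ r = r₂) ∧
        (c = F rstar → ∃! r : ℝ, 0 < r ∧ F r = c) ∧
        (F rstar < c → ∀ r : ℝ, 0 < r → F r ≠ c) := by
  have hp : 0 ≤ p := by linarith
  change S = radialSupport α q at hS
  subst hF hS
  have hr₀ := peakRadius_mem_radialSupport hα hp hpn hq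
  have hright := tendsto_rpow_mul_gGauss_smul_nhdsLT (p := p) hα hq hpn.le he
  have htop := fun hq₀ : q ≤ 0 => tendsto_rpow_mul_gGauss_smul_atTop hα hp hpn.le hq₀ he
  obtain ⟨hmono, hanti⟩ := strictMonoOn_Ioc_and_strictAntiOn_Ici_of_hasDerivAt
    ordConnected_radialSupport (Ioc_subset_radialSupport hr₀)
    fun r hr => hasDerivAt_rpow_mul_gGauss_smul hα hp hpn hq he hr
  refine ⟨tendsto_rpow_mul_gGauss_smul_nhdsGT_zero hα hq hpn, hright, htop,
    fun hq₀ r hr => rpow_mul_gGauss_smul_eq_zero_of_le hα hq he hq₀ hr, _, hr₀, ⟨hmono, hanti⟩,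
    fun r hr h => eq_of_strictMonoOn_Ioc_of_strictAntiOn_Ici radialSupport_subset_Ioi hr₀
      hmono hanti hr h.1 h.2, rpow_mul_gGauss_smul_pos hα hq he hr₀, ?_⟩
  exact preimage_count_of_strictMonoOn_Ioc_of_strictAntiOn_Ici (radialSupport_subset_Ioi hr₀)
    ordConnected_radialSupport (Ioc_subset_radialSupport hr₀)
    (continuous_rpow_mul_gGauss_smul hα hq hpn.le).continuousOn hmono hanti
    (fun _ => rpow_mul_gGauss_smul_eq_zero hα hq he)
    (tendsto_rpow_mul_gGauss_smul_nhdsGT_zero hα hq hpn)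
    (fun _ => exists_mem_radialSupport_gt_apply_lt hr₀ hright htop)
    (rpow_mul_gGauss_smul_pos hα hq he hr₀)

/-- Counting of constant solutions of the isotropic equation. For
`1 ≤ p < n`, `α > 0`, `q < α/(n+α)`, set `F(r) = r^{n−p} g_{α,q}(r e)` (`e` a unit vector)
and `R = (α/q)^{1/α}` if `q > 0`, `R = ∞` if `q ≤ 0`. Then `F → 0` at `0⁺` and at `R`,
`F` vanishes on `[R,∞)` when `q > 0`, there is a unique `r* ∈ (0,R)` with `F` strictly
increasing on `(0,r*]` and strictly decreasing on `[r*,R)`, and, with `c* = F(r*) > 0`,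
the equation `F(r) = c`, `r > 0`, has precisely two solutions if `0 < c < c*`, exactly one
if `c = c*`, and none if `c > c*`. -/
theorem isotropic_constant_solution_count
    (n : ℕ) (hn : 2 ≤ n) (p α q : ℝ) (hp1 : 1 ≤ p) (hpn : p < (n : ℝ))
    (hα : 0 < α) (hq : q < α / ((n : ℝ) + α))
    (e : EuclideanSpace ℝ (Fin n)) (he : ‖e‖ = 1)
    (F : ℝ → ℝ) (hF : F = fun r => r ^ ((n : ℝ) - p) * gGauss n α q (r • e))
    (S : Set ℝ)
    (hS : S = if 0 < q then Set.Ioo (0 : ℝ) ((α / q) ^ (1 / α)) else Set.Ioi (0 : ℝ)) :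
    Filter.Tendsto F (nhdsWithin 0 (Set.Ioi 0)) (nhds 0) ∧
    (0 < q → Filter.Tendsto F
      (nhdsWithin ((α / q) ^ (1 / α)) (Set.Iio ((α / q) ^ (1 / α)))) (nhds 0)) ∧
    (q ≤ 0 → Filter.Tendsto F Filter.atTop (nhds 0)) ∧
    (0 < q → ∀ r : ℝ, (α / q) ^ (1 / α) ≤ r → F r = 0) ∧
    ∃ rstar ∈ S,
      (StrictMonoOn F (Set.Ioc 0 rstar) ∧ StrictAntiOn F (S ∩ Set.Ici rstar)) ∧
      (∀ r' ∈ S,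
        (StrictMonoOn F (Set.Ioc 0 r') ∧ StrictAntiOn F (S ∩ Set.Ici r')) → r' = rstar) ∧
      0 < F rstar ∧
      ∀ c : ℝ,
        (0 < c → c < F rstar →
          ∃ r₁ r₂ : ℝ, 0 < r₁ ∧ 0 < r₂ ∧ r₁ ≠ r₂ ∧ F r₁ = c ∧ F r₂ = c ∧
            ∀ r : ℝ, 0 < r → F r = c → r = r₁ ∨ r = r₂) ∧
        (c = F rstar → ∃! r : ℝ, 0 < r ∧ F r = c) ∧
        (F rstar < c → ∀ r : ℝ, 0 < r → F r ≠ c) :=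
  isotropic_constant_solution_count_general n p α q hp1 hpn hα hq e he F hF S hS
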